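/- arXiv:1411.6371 — 4 statements merged into one kernel-verified Lean document; each statement's English description precedes it below -/
import Mathlib

section
/- For any n ≥ 1 and any mountain-valley string s ∈ {M,V}^n, a paper strip with n equally spaced creases admits a valid flat folded state consistent with s. (Proof idea: repeatedly fold at the rightmost crease.) -/
/-- Two pairs of levels are nested or disjoint (the noncrossing condition). -/
def nestedOrDisjoint {α : Type*} [LinearOrder α] (a b u v : α) : Prop :=
  max a b < min u v ∨ max u v < min a b ∨
    (min a b ≤ min u v ∧ max u v ≤ max a b) ∨ (min u v ≤ min a b ∧ max a b ≤ max u v)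

/-- A valid flat folded state of a strip with `n` equally spaced creases and
mountain-valley string `s : Fin n → Bool` (`true` = valley, `false` = mountain):
a stacking order, i.e. a bijective assignment `π` of the `n + 1` unit segments to
levels.  Crease `i` joins segments `i` and `i + 1`; segment `i` travels rightward
(top side up) iff `i` is even, so a valley there puts segment `i+1` directly above
segment `i` in orientation, giving the recorded order condition.  Crease `i` folds
at the right end iff `i` is even, so two creases with indices of equal parity lie
on the same side, and their pairs of segments must not interleave in the stacking
order, i.e. must be nested or disjoint. -/
def ValidStack (n : ℕ) (s : Fin n → Bool) (π : Fin (n + 1) → Fin (n + 1)) : Prop :=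
  Function.Bijective π ∧
  (∀ i : Fin n, (π i.castSucc < π i.succ ↔ s i = decide (Even (i : ℕ)))) ∧
  (∀ i j : Fin n, i ≠ j → (i : ℕ) % 2 = (j : ℕ) % 2 →
    nestedOrDisjoint (π i.castSucc) (π i.succ) (π j.castSucc) (π j.succ))

/-!
Fold at the rightmost crease, by induction on the number of creases: the new last segment
is inserted into the stack directly above or below the old last segment, as the crease's
assignment dictates. The new crease then occupies two adjacent levels, and no pair of levels
avoiding both can interleave with it.
-/

section nestedOrDisjoint

variable {α β : Type*} [LinearOrder α] [LinearOrder β] {a b u v : α}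

lemma nestedOrDisjoint_comm : nestedOrDisjoint a b u v ↔ nestedOrDisjoint u v a b := by
  unfold nestedOrDisjoint; tauto

lemma nestedOrDisjoint_swap : nestedOrDisjoint a b u v ↔ nestedOrDisjoint b a u v := by
  simp only [nestedOrDisjoint, min_comm a b, max_comm a b]

lemma StrictMono.nestedOrDisjoint_iff {f : α → β} (hf : StrictMono f) :
    nestedOrDisjoint (f a) (f b) (f u) (f v) ↔ nestedOrDisjoint a b u v := by
  simp only [nestedOrDisjoint, ← hf.monotone.map_min, ← hf.monotone.map_max, hf.lt_iff_lt,
    hf.le_iff_le]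

lemma nestedOrDisjoint_of_covBy (hab : a ⋖ b) (hua : u ≠ a) (hub : u ≠ b) (hva : v ≠ a)
    (hvb : v ≠ b) : nestedOrDisjoint a b u v := by
  have outside : ∀ w, w ≠ a → w ≠ b → w < a ∨ b < w := fun w hwa hwb =>
    (lt_or_gt_of_ne hwa).imp_right fun h : a < w => (hab.ge_of_gt h).lt_of_ne hwb.symm
  unfold nestedOrDisjoint
  rw [min_eq_left hab.le, max_eq_right hab.le]
  rcases outside u hua hub with hu | hu <;> rcases outside v hva hvb with hv | hv
  · exact Or.inr (Or.inl (max_lt hu hv))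
  · exact Or.inr (Or.inr (Or.inr ⟨min_le_of_left_le hu.le, le_max_of_le_right hv.le⟩))
  · exact Or.inr (Or.inr (Or.inr ⟨min_le_of_right_le hv.le, le_max_of_le_left hu.le⟩))
  · exact Or.inl (lt_min hu hv)

end nestedOrDisjoint

section foldLast

variable {n : ℕ}

def foldLast (π : Fin (n + 1) → Fin (n + 1)) (p : Fin (n + 2)) : Fin (n + 2) → Fin (n + 2) :=
  Fin.snoc (p.succAbove ∘ π) p

@[simp]
lemma foldLast_castSucc (π : Fin (n + 1) → Fin (n + 1)) (p : Fin (n + 2)) (i : Fin (n + 1)) :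
    foldLast π p i.castSucc = p.succAbove (π i) := by
  simp [foldLast]

@[simp]
lemma foldLast_castSucc_succ (π : Fin (n + 1) → Fin (n + 1)) (p : Fin (n + 2)) (i : Fin n) :
    foldLast π p i.castSucc.succ = p.succAbove (π i.succ) := by
  rw [Fin.succ_castSucc, foldLast_castSucc]

@[simp]
lemma foldLast_last (π : Fin (n + 1) → Fin (n + 1)) (p : Fin (n + 2)) :
    foldLast π p (Fin.last (n + 1)) = p := by
  simp [foldLast]

lemma Function.Bijective.foldLast {π : Fin (n + 1) → Fin (n + 1)} (hπ : Function.Bijective π)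
    (p : Fin (n + 2)) : Function.Bijective (foldLast π p) := by
  refine Finite.injective_iff_bijective.mp (Fin.snoc_injective_iff.mpr ⟨?_, ?_⟩)
  · exact Fin.succAbove_right_injective.comp hπ.injective
  · rintro ⟨i, hi⟩
    exact Fin.succAbove_ne p (π i) hi

variable {π : Fin (n + 1) → Fin (n + 1)} {p : Fin (n + 2)}

/-- The crease `k` lies on the same side as the new crease `n`, so it is not the crease `n - 1`
sharing segment `n`: its segments avoid both levels of the new crease, which are adjacent. -/
lemma nestedOrDisjoint_foldLast (hπ : Function.Injective π)
    (hadj : p.succAbove (π (Fin.last n)) ⋖ p ∨ p ⋖ p.succAbove (π (Fin.last n)))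
    {k : Fin n} (hk : (k : ℕ) % 2 = n % 2) :
    nestedOrDisjoint (p.succAbove (π (Fin.last n))) p
      (p.succAbove (π k.castSucc)) (p.succAbove (π k.succ)) := by
  have hcast : k.castSucc ≠ Fin.last n := (Fin.castSucc_lt_last k).ne
  have hsucc : k.succ ≠ Fin.last n := fun h => by
    have : (k : ℕ) + 1 = n := by simpa [Fin.ext_iff] using h
    omega
  have avoid : ∀ i ≠ Fin.last n, p.succAbove (π i) ≠ p.succAbove (π (Fin.last n)) :=
    fun i hi => (Fin.succAbove_right_injective.comp hπ).ne hi
  rcases hadj with hadj | hadj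
  · exact nestedOrDisjoint_of_covBy hadj (avoid _ hcast) (Fin.succAbove_ne _ _)
      (avoid _ hsucc) (Fin.succAbove_ne _ _)
  · exact nestedOrDisjoint_swap.mpr <| nestedOrDisjoint_of_covBy hadj (Fin.succAbove_ne _ _)
      (avoid _ hcast) (Fin.succAbove_ne _ _) (avoid _ hsucc)

lemma ValidStack.foldLast {s : Fin (n + 1) → Bool} (h : ValidStack n (fun j => s j.castSucc) π)
    (hord : p.succAbove (π (Fin.last n)) < p ↔ s (Fin.last n) = decide (Even n))
    (hadj : p.succAbove (π (Fin.last n)) ⋖ p ∨ p ⋖ p.succAbove (π (Fin.last n))) :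
    ValidStack (n + 1) s (foldLast π p) := by
  obtain ⟨hbij, hord_old, hnc_old⟩ := h
  have hmono := Fin.strictMono_succAbove p
  refine ⟨hbij.foldLast p, fun i => ?_, fun i j hij hpar => ?_⟩
  · induction i using Fin.lastCases with
    | last => simpa using hord
    | cast k => simpa [hmono.lt_iff_lt] using hord_old k
  · induction i using Fin.lastCases with
    | last =>
      induction j using Fin.lastCases with
      | last => exact absurd rfl hij
      | cast l =>
        simpa using nestedOrDisjoint_foldLast hbij.injective hadj (by simpa using hpar.symm)
    | cast k =>
      induction j using Fin.lastCases with
      | last =>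
        refine nestedOrDisjoint_comm.mpr ?_
        simpa using nestedOrDisjoint_foldLast hbij.injective hadj (by simpa using hpar)
      | cast l =>
        simpa [hmono.nestedOrDisjoint_iff] using
          hnc_old k l (fun h => hij (congrArg _ h)) (by simpa using hpar)

end foldLast

theorem exists_validStack (n : ℕ) (s : Fin n → Bool) : ∃ π, ValidStack n s π := by
  induction n with
  | zero => exact ⟨id, Function.bijective_id, fun i => i.elim0, fun i => i.elim0⟩
  | succ n ih =>
    obtain ⟨π, hπ⟩ := ih (fun j => s j.castSucc)
    set a := π (Fin.last n)
    have hcovBy : a.castSucc ⋖ a.succ := by simp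
    by_cases hs : s (Fin.last n) = decide (Even n)
    · refine ⟨foldLast π a.succ, hπ.foldLast ?_ ?_⟩ <;> rw [Fin.succAbove_succ_self]
      · exact iff_of_true hcovBy.lt hs
      · exact Or.inl hcovBy
    · refine ⟨foldLast π a.castSucc, hπ.foldLast ?_ ?_⟩ <;> rw [Fin.succAbove_castSucc_self]
      · exact iff_of_false hcovBy.lt.asymm hs
      · exact Or.inr hcovBy

theorem stmt_1_general (n : ℕ) (s : Fin n → Bool) :
    ∃ π : Fin (n + 1) → Fin (n + 1), ValidStack n s π :=
  exists_validStack n s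

/-- For any `n ≥ 1` and any mountain-valley string `s ∈ {M,V}ⁿ`, a paper strip with
`n` equally spaced creases admits a valid flat folded state consistent with `s`. -/
theorem stmt_1 (n : ℕ) (hn : 1 ≤ n) (s : Fin n → Bool) :
    ∃ π : Fin (n + 1) → Fin (n + 1), ValidStack n s π :=
  stmt_1_general n s
end

section
/- Let n ≥ 1 and consider a strip with 2n creases and mountain-valley string M^n V^n, where all interior segments S_1,…,S_{2n-1} have equal length ℓ and the two end segments S_0, S_{2n} have equal length L > ℓ. Then the flat folded state is unique up to reversal of the entire stacking order, and its stacking order from one side is S_0, S_{2n-1}, S_2, S_{2n-3}, …, S_{2i}, S_{2(n-i)-1}, …, S_1, S_{2n}. -/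
open Finset

/-- Folded image of crease point `pᵢ` (at coordinate `x i`), for the determined
piecewise isometry that starts rightward and reverses direction at each crease. -/
def foldedPos (n : ℕ) (x : Fin (n + 2) → ℝ) (i : Fin (n + 2)) : ℝ :=
  ∑ j : Fin (n + 1),
    if (j : ℕ) < (i : ℕ) then (-1 : ℝ) ^ (j : ℕ) * (x j.succ - x j.castSucc) else 0

/-- Endpoints of the folded image of segment `Sᵢ`. -/
def segLo (n : ℕ) (x : Fin (n + 2) → ℝ) (i : Fin (n + 1)) : ℝ :=
  min (foldedPos n x i.castSucc) (foldedPos n x i.succ)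

def segHi (n : ℕ) (x : Fin (n + 2) → ℝ) (i : Fin (n + 1)) : ℝ :=
  max (foldedPos n x i.castSucc) (foldedPos n x i.succ)

/-- Folded image of crease `i` (the crease at `x (i+1)`, joining segments `i`, `i+1`). -/
def creasePt (n : ℕ) (x : Fin (n + 2) → ℝ) (i : Fin n) : ℝ :=
  foldedPos n x i.succ.castSucc

/-- The folded images of two segments overlap in an open interval. -/
def SegOverlap (n : ℕ) (x : Fin (n + 2) → ℝ) (i j : Fin (n + 1)) : Prop :=
  max (segLo n x i) (segLo n x j) < min (segHi n x i) (segHi n x j)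

/-- A valid leveled folded state: overlapping segments get distinct levels; at each
crease the mountain/valley letter (`true` = valley) dictates the relative order of the
two joined segments (segment `i` travels rightward with top side up iff `i` is even);
no segment properly crossing a crease point lies strictly between the two segments
joined there; and two creases folded at the same point with all four segments
extending to the same side have nested-or-disjoint level pairs. -/
def ValidLeveled (n : ℕ) (x : Fin (n + 2) → ℝ) (s : Fin n → Bool)
    (lev : Fin (n + 1) → ℤ) : Prop :=
  (∀ i j : Fin (n + 1), i ≠ j → SegOverlap n x i j → lev i ≠ lev j) ∧
  (∀ i : Fin n, (lev i.castSucc < lev i.succ ↔ s i = decide (Even (i : ℕ)))) ∧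
  (∀ (i : Fin n) (j : Fin (n + 1)), segLo n x j < creasePt n x i →
      creasePt n x i < segHi n x j →
      ¬ (min (lev i.castSucc) (lev i.succ) < lev j ∧
         lev j < max (lev i.castSucc) (lev i.succ))) ∧
  (∀ i i' : Fin n, i ≠ i' → creasePt n x i = creasePt n x i' →
      ((foldedPos n x i.castSucc.castSucc < creasePt n x i) ↔
        (foldedPos n x i'.castSucc.castSucc < creasePt n x i')) →
      nestedOrDisjoint (lev i.castSucc) (lev i.succ) (lev i'.castSucc) (lev i'.succ))

/-!
All `2n + 1` segments of the spiral fold onto a common interval `(L - ℓ, L)`; the even creases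
land at `L`, the odd ones at `L - ℓ`, and only the end segments `S₀` and `S_{2n}` reach past these
points. A valid stacking is therefore governed by a purely combinatorial system
(`SpiralConstraints`): the crease directions, nesting among the even and among the odd creases,
and neither end segment lying between the two segments of a crease it crosses. These force `S₀`
to the top and `S_{2n}` to the bottom; removing both and flipping the stack leaves the same
system for `n - 1`, so induction on `n` pins down the whole order. Conversely, the levels `-ρ`
are valid because within each class of creases the two joined segments have constant rank sum,
which makes any two such pairs nested.
-/

section
variable {α : Type*} [LinearOrder α] {a b u v : α}

lemma nestedOrDisjoint.swap (h : nestedOrDisjoint a b u v) : nestedOrDisjoint b a v u := by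
  simpa only [nestedOrDisjoint, min_comm b a, max_comm b a, min_comm v u, max_comm v u] using h

lemma nestedOrDisjoint.symm (h : nestedOrDisjoint a b u v) : nestedOrDisjoint u v a b := by
  unfold nestedOrDisjoint at h ⊢
  tauto

lemma lt_iff_lt_of_not_between (h : ¬ (min u v < b ∧ b < max u v)) (hu : u ≠ b) (hv : v ≠ b) :
    u < b ↔ v < b := by
  simp only [min_lt_iff, lt_max_iff, not_and_or, not_or, not_lt] at h
  rcases h with ⟨hbu, hbv⟩ | ⟨hub, hvb⟩
  · exact iff_of_false hbu.not_gt hbv.not_gt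
  · exact iff_of_true (hub.lt_of_ne hu) (hvb.lt_of_ne hv)

lemma not_between_of_nestedOrDisjoint (h : nestedOrDisjoint a b u v) (hu : u < a) (hv : v < a) :
    ¬ (min u v < b ∧ b < max u v) := by
  unfold nestedOrDisjoint at h
  grind

end

section
variable {α : Type*} [AddCommGroup α] [LinearOrder α] [IsOrderedAddMonoid α] {a b u v : α}

lemma nestedOrDisjoint.neg (h : nestedOrDisjoint a b u v) :
    nestedOrDisjoint (-a) (-b) (-u) (-v) := by
  simp only [nestedOrDisjoint, min_neg_neg, max_neg_neg, neg_lt_neg_iff, neg_le_neg_iff] at h ⊢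
  tauto

lemma nestedOrDisjoint_of_add_eq (h : a + b = u + v) : nestedOrDisjoint a b u v := by
  have hab := min_add_max a b
  have huv := min_add_max u v
  rcases le_total (min a b) (min u v) with h' | h'
  · refine Or.inr (Or.inr (Or.inl ⟨h', ?_⟩))
    grind
  · refine Or.inr (Or.inr (Or.inr ⟨h', ?_⟩))
    grind

end

def spiralRank (n k : ℕ) : ℕ := if Even k then k else 2 * n - k

lemma spiralRank_cases (n k : ℕ) :
    (k % 2 = 0 ∧ spiralRank n k = k) ∨ (k % 2 = 1 ∧ spiralRank n k = 2 * n - k) := by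
  unfold spiralRank
  split_ifs with h
  · exact Or.inl ⟨Nat.even_iff.mp h, rfl⟩
  · exact Or.inr ⟨Nat.odd_iff.mp (Nat.not_even_iff_odd.mp h), rfl⟩

/-- The conditions of `ValidLeveled` that matter for the spiral strip, with the levels extended
to all of `ℕ` so that the induction can shift indices. -/
structure SpiralConstraints (n : ℕ) (a : ℕ → ℤ) : Prop where
  injOn : Set.InjOn a (Set.Iic (2 * n))
  crease : ∀ i < 2 * n, (a i < a (i + 1) ↔ (n ≤ i ↔ i % 2 = 0))
  nest_even : ∀ m < n, ∀ m' < n, m ≠ m' →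
    nestedOrDisjoint (a (2 * m)) (a (2 * m + 1)) (a (2 * m')) (a (2 * m' + 1))
  nest_odd : ∀ m < n, ∀ m' < n, m ≠ m' →
    nestedOrDisjoint (a (2 * m + 1)) (a (2 * m + 2)) (a (2 * m' + 1)) (a (2 * m' + 2))
  first_not_between : ∀ m < n,
    ¬ (min (a (2 * m + 1)) (a (2 * m + 2)) < a 0 ∧ a 0 < max (a (2 * m + 1)) (a (2 * m + 2)))
  last_not_between : ∀ m < n,
    ¬ (min (a (2 * m)) (a (2 * m + 1)) < a (2 * n) ∧ a (2 * n) < max (a (2 * m)) (a (2 * m + 1)))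

namespace SpiralConstraints

variable {n : ℕ} {a : ℕ → ℤ}

lemma ne (hs : SpiralConstraints n a) {i j : ℕ} (hi : i ≤ 2 * n) (hj : j ≤ 2 * n) (hij : i ≠ j) :
    a i ≠ a j :=
  fun h => hij (hs.injOn hi hj h)

lemma reflect (hs : SpiralConstraints n a) : SpiralConstraints n (fun j => -a (2 * n - j)) where
  injOn i hi j hj h := by
    have := hs.injOn (show 2 * n - i ≤ 2 * n by omega) (show 2 * n - j ≤ 2 * n by omega)
      (neg_inj.mp h)
    simp only [Set.mem_Iic] at hi hj
    omega
  crease i hi := by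
    have := hs.crease (2 * n - (i + 1)) (by omega)
    rw [show 2 * n - (i + 1) + 1 = 2 * n - i by omega] at this
    rw [neg_lt_neg_iff, this]
    omega
  nest_even m hm m' hm' hne := by
    convert nestedOrDisjoint.neg (nestedOrDisjoint.swap
      (hs.nest_odd (n - 1 - m) (by omega) (n - 1 - m') (by omega) (by omega))) using 3 <;>
      first | rfl | omega
  nest_odd m hm m' hm' hne := by
    convert nestedOrDisjoint.neg (nestedOrDisjoint.swap
      (hs.nest_even (n - 1 - m) (by omega) (n - 1 - m') (by omega) (by omega))) using 3 <;>
      first | rfl | omega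
  first_not_between m hm := by
    have := hs.last_not_between (n - 1 - m) (by omega)
    rw [show 2 * n - (2 * m + 1) = 2 * (n - 1 - m) + 1 by omega,
      show 2 * n - (2 * m + 2) = 2 * (n - 1 - m) by omega, Nat.sub_zero]
    simp only [min_neg_neg, max_neg_neg, neg_lt_neg_iff]
    rw [min_comm, max_comm]
    tauto
  last_not_between m hm := by
    have := hs.first_not_between (n - 1 - m) (by omega)
    rw [show 2 * n - 2 * m = 2 * (n - 1 - m) + 2 by omega,
      show 2 * n - (2 * m + 1) = 2 * (n - 1 - m) + 1 by omega, Nat.sub_self]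
    simp only [min_neg_neg, max_neg_neg, neg_lt_neg_iff]
    rw [min_comm, max_comm]
    tauto

lemma lt_first_iff_of_odd (hs : SpiralConstraints n a) {i : ℕ} (hi : i < 2 * n) (hodd : i % 2 = 1) :
    a i < a 0 ↔ a (i + 1) < a 0 := by
  obtain ⟨m, rfl⟩ : ∃ m, i = 2 * m + 1 := ⟨i / 2, by omega⟩
  exact lt_iff_lt_of_not_between (hs.first_not_between m (by omega))
    (hs.ne (by omega) (by omega) (by omega)) (hs.ne (by omega) (by omega) (by omega))

/-- Even creases of the first half go down, and odd creases never straddle `a 0`. -/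
lemma lt_first_of_le_half (hs : SpiralConstraints n a) {i : ℕ} (h1 : 1 ≤ i) (hi : i ≤ n) :
    a i < a 0 := by
  induction i, h1 using Nat.le_induction with
  | base =>
    have := hs.crease 0 (by omega)
    rw [zero_add] at this
    have := hs.ne (i := 0) (j := 1) (by omega) (by omega) (by omega)
    omega
  | succ i h1 ih =>
    rcases Nat.mod_two_eq_zero_or_one i with hpar | hpar
    · have := hs.crease i (by omega)
      have := hs.ne (i := i) (j := i + 1) (by omega) (by omega) (by omega)
      have := ih (by omega)
      omega
    · exact (hs.lt_first_iff_of_odd (by omega) hpar).mp (ih (by omega))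

/-- Even creases of the second half go up, and odd creases never straddle `a 0`. -/
lemma first_lt_of_half_le (hs : SpiralConstraints n a) {i k : ℕ} (hni : n ≤ i) (hik : i ≤ k)
    (hk : k ≤ 2 * n) (hi : a 0 < a i) : a 0 < a k := by
  induction k, hik using Nat.le_induction with
  | base => exact hi
  | succ k hik ih =>
    have ih := ih (by omega)
    rcases Nat.mod_two_eq_zero_or_one k with hpar | hpar
    · have := hs.crease k (by omega)
      omega
    · have := (hs.lt_first_iff_of_odd (by omega) hpar).not
      have := hs.ne (i := 0) (j := k + 1) (by omega) (by omega) (by omega)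
      omega

lemma last_lt_of_half_le (hs : SpiralConstraints n a) {i : ℕ} (hni : n ≤ i) (hi : i < 2 * n) :
    a (2 * n) < a i := by
  have := hs.reflect.lt_first_of_le_half (i := 2 * n - i) (by omega) (by omega)
  simp only [Nat.sub_zero, show 2 * n - (2 * n - i) = i by omega, neg_lt_neg_iff] at this
  exact this

lemma lt_first (hs : SpiralConstraints n a) {i : ℕ} (h1 : 1 ≤ i) (hi : i ≤ 2 * n) :
    a i < a 0 := by
  rcases le_or_gt i n with hin | hni
  · exact hs.lt_first_of_le_half h1 hin
  -- otherwise `a (2n)` would be above `a 0` too, yet `a (2n) < a n < a 0`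
  by_contra hcon
  have hi0 : a 0 < a i := lt_of_le_of_ne (not_lt.mp hcon) (hs.ne (by omega) hi (by omega))
  have := hs.first_lt_of_half_le hni.le hi le_rfl hi0
  have := hs.lt_first_of_le_half (i := n) (by omega) le_rfl
  have := hs.last_lt_of_half_le (i := n) le_rfl (by omega)
  omega

lemma last_lt (hs : SpiralConstraints n a) {j : ℕ} (hj : j < 2 * n) : a (2 * n) < a j := by
  have := hs.reflect.lt_first (i := 2 * n - j) (by omega) (by omega)
  simp only [Nat.sub_zero, show 2 * n - (2 * n - j) = j by omega, neg_lt_neg_iff] at this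
  exact this

/-- Removing both end segments and flipping the stack leaves the spiral of size `2n`. -/
lemma peel (hs : SpiralConstraints (n + 1) a) : SpiralConstraints n (fun j => -a (j + 1)) where
  injOn i hi j hj h := by
    simp only [Set.mem_Iic] at hi hj
    have := hs.injOn (show i + 1 ≤ 2 * (n + 1) by omega) (show j + 1 ≤ 2 * (n + 1) by omega)
      (neg_inj.mp h)
    omega
  crease i hi := by
    have := hs.crease (i + 1) (by omega)
    have := hs.ne (i := i + 1) (j := i + 1 + 1) (by omega) (by omega) (by omega)
    rw [neg_lt_neg_iff]
    omega
  nest_even m hm m' hm' hne := nestedOrDisjoint.neg (hs.nest_odd m (by omega) m' (by omega) hne)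
  nest_odd m hm m' hm' hne :=
    nestedOrDisjoint.neg (hs.nest_even (m + 1) (by omega) (m' + 1) (by omega) (by omega))
  first_not_between m hm := by
    have := not_between_of_nestedOrDisjoint
      (hs.nest_even 0 (by omega) (m + 1) (by omega) (by omega))
      (hs.lt_first (by omega) (by omega)) (hs.lt_first (by omega) (by omega))
    rw [show 2 * m + 1 + 1 = 2 * (m + 1) by omega]
    simp only [mul_zero, zero_add] at this
    simp only [min_neg_neg, max_neg_neg, neg_lt_neg_iff, zero_add]
    tauto
  last_not_between m hm := by
    have hlast : ∀ j < 2 * n + 2, a (2 * n + 2) < a j := fun j hj => hs.last_lt hj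
    have := not_between_of_nestedOrDisjoint
      (nestedOrDisjoint.neg (nestedOrDisjoint.swap
        (nestedOrDisjoint.symm (hs.nest_odd m (by omega) n (by omega) (by omega)))))
      (neg_lt_neg (hlast _ (by omega))) (neg_lt_neg (hlast _ (by omega)))
    rw [min_comm, max_comm]
    exact this

lemma lt_iff_rank_lt (hs : SpiralConstraints n a) {i j : ℕ} (hi : i ≤ 2 * n) (hj : j ≤ 2 * n) :
    a i < a j ↔ spiralRank n j < spiralRank n i := by
  induction n generalizing a i j with
  | zero =>
    obtain rfl : i = 0 := by omega
    obtain rfl : j = 0 := by omega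
    simp
  | succ n ih =>
    have ri := spiralRank_cases (n + 1) i
    have rj := spiralRank_cases (n + 1) j
    by_cases hinner : 1 ≤ i ∧ i ≤ 2 * n + 1 ∧ 1 ≤ j ∧ j ≤ 2 * n + 1
    -- `spiralRank n (k - 1) + spiralRank (n + 1) k = 2 * n + 1` for inner `k`: peeling reverses
    -- the ranks as well as the levels
    · have := ih hs.peel (i := j - 1) (j := i - 1) (by omega) (by omega)
      rw [Nat.sub_add_cancel (by omega), Nat.sub_add_cancel (by omega), neg_lt_neg_iff] at this
      have := spiralRank_cases n (i - 1)
      have := spiralRank_cases n (j - 1)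
      omega
    rcases eq_or_ne i j with rfl | hij
    · simp
    have hfirst : ∀ k, 1 ≤ k → k ≤ 2 * n + 2 → a k < a 0 := fun k h1 h2 => hs.lt_first h1 h2
    have hlast : ∀ k < 2 * n + 2, a (2 * n + 2) < a k := fun k h => hs.last_lt h
    have := hfirst i
    have := hfirst j
    have := hlast i
    have := hlast j
    rcases (show i = 0 ∨ i = 2 * n + 2 ∨ j = 0 ∨ j = 2 * n + 2 by omega)
      with rfl | rfl | rfl | rfl <;> omega

end SpiralConstraints

lemma foldedPos_zero (N : ℕ) (x : Fin (N + 2) → ℝ) : foldedPos N x 0 = 0 := by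
  simp [foldedPos]

lemma foldedPos_succ (N : ℕ) (x : Fin (N + 2) → ℝ) (i : Fin (N + 1)) :
    foldedPos N x i.succ =
      foldedPos N x i.castSucc + (-1) ^ (i : ℕ) * (x i.succ - x i.castSucc) := by
  have hsplit : ∀ j : Fin (N + 1), ∀ g : ℝ,
      (if (j : ℕ) < i + 1 then g else 0) =
        (if (j : ℕ) < i then g else 0) + if j = i then g else 0 := by
    intro j g
    rcases lt_trichotomy (j : ℕ) i with h | h | h
    · simp [h, h.trans (Nat.lt_succ_self _), Fin.ne_of_lt h]
    · simp [Fin.ext h]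
    · simp [show ¬ (j : ℕ) < i + 1 by omega, h.not_gt, (Fin.ne_of_lt h).symm]
  simp only [foldedPos, Fin.val_succ, Fin.val_castSucc, hsplit, Finset.sum_add_distrib,
    Finset.sum_ite_eq', Finset.mem_univ, if_true]

def spiralStrip (n : ℕ) (L ℓ : ℝ) : Fin (2 * n + 2) → ℝ := fun i =>
  if (i : ℕ) = 0 then 0
  else if (i : ℕ) = 2 * n + 1 then 2 * L + (2 * (n : ℝ) - 1) * ℓ
  else L + (((i : ℕ) : ℝ) - 1) * ℓ

def spiralFoldedPos (n : ℕ) (L ℓ : ℝ) (k : ℕ) : ℝ :=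
  if k = 0 then 0 else if k = 2 * n + 1 then 2 * L - ℓ else if Even k then L - ℓ else L

def spiralMV (n : ℕ) : Fin (2 * n) → Bool := fun i => decide (n ≤ (i : ℕ))

def spiralLevel (n : ℕ) (k : Fin (2 * n + 1)) : ℤ := -(spiralRank n k : ℤ)

section SpiralStrip

variable {n : ℕ} {L ℓ : ℝ}

lemma spiralStrip_succ_sub (hn : 1 ≤ n) (i : Fin (2 * n + 1)) :
    spiralStrip n L ℓ i.succ - spiralStrip n L ℓ i.castSucc =
      if (i : ℕ) = 0 ∨ (i : ℕ) = 2 * n then L else ℓ := by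
  obtain ⟨k, hk⟩ := i
  simp only [spiralStrip, Fin.val_succ, Fin.val_castSucc]
  rcases (show k = 0 ∨ k = 2 * n ∨ (0 < k ∧ k < 2 * n) by omega) with rfl | rfl | ⟨h0, h2⟩
  · simp [show n ≠ 0 by omega]
  · simp [show 2 * n ≠ 0 by omega]
    ring
  · simp [h0.ne', h2.ne, show k ≠ 2 * n + 1 by omega]
    ring

lemma spiralFoldedPos_succ (hn : 1 ≤ n) {k : ℕ} (hk : k ≤ 2 * n) :
    spiralFoldedPos n L ℓ (k + 1) =
      spiralFoldedPos n L ℓ k + (-1) ^ k * (if k = 0 ∨ k = 2 * n then L else ℓ) := by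
  rcases (show k = 0 ∨ k = 2 * n ∨ (0 < k ∧ k < 2 * n) by omega) with rfl | rfl | ⟨h0, h2⟩
  · simp [spiralFoldedPos, show n ≠ 0 by omega]
  · simp [spiralFoldedPos, show 2 * n ≠ 0 by omega]
    ring
  · rcases Nat.even_or_odd k with hk | hk
    · simp [spiralFoldedPos, h0.ne', h2.ne, show k ≠ 2 * n + 1 by omega, hk, hk.neg_one_pow,
        Nat.even_add_one]
    · simp [spiralFoldedPos, h0.ne', h2.ne, show k ≠ 2 * n + 1 by omega, hk.neg_one_pow,
        Nat.even_add_one, Nat.not_even_iff_odd.mpr hk, sub_eq_add_neg]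

lemma foldedPos_spiralStrip (hn : 1 ≤ n) (i : Fin (2 * n + 2)) :
    foldedPos (2 * n) (spiralStrip n L ℓ) i = spiralFoldedPos n L ℓ i := by
  induction i using Fin.induction with
  | zero => simp [foldedPos_zero, spiralFoldedPos]
  | succ i ih =>
    rw [foldedPos_succ, ih, spiralStrip_succ_sub hn, Fin.val_succ, Fin.val_castSucc,
      spiralFoldedPos_succ hn (by omega)]

lemma segLo_spiralStrip (hn : 1 ≤ n) (hℓ : 0 ≤ ℓ) (hL : ℓ ≤ L) (j : Fin (2 * n + 1)) :
    segLo (2 * n) (spiralStrip n L ℓ) j = if (j : ℕ) = 0 then 0 else L - ℓ := by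
  have := j.isLt
  simp only [segLo, foldedPos_spiralStrip hn, Fin.val_castSucc, Fin.val_succ, spiralFoldedPos,
    Nat.even_iff]
  split_ifs <;> first | contradiction | omega | (simp only [min_def]; split_ifs <;> linarith)

lemma segHi_spiralStrip (hn : 1 ≤ n) (hℓ : 0 ≤ ℓ) (hL : ℓ ≤ L) (j : Fin (2 * n + 1)) :
    segHi (2 * n) (spiralStrip n L ℓ) j = if (j : ℕ) = 2 * n then 2 * L - ℓ else L := by
  have := j.isLt
  simp only [segHi, foldedPos_spiralStrip hn, Fin.val_castSucc, Fin.val_succ, spiralFoldedPos,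
    Nat.even_iff]
  split_ifs <;> first | contradiction | omega | (simp only [max_def]; split_ifs <;> linarith)

lemma creasePt_spiralStrip (hn : 1 ≤ n) (i : Fin (2 * n)) :
    creasePt (2 * n) (spiralStrip n L ℓ) i = if Even (i : ℕ) then L else L - ℓ := by
  have := i.isLt
  simp only [creasePt, foldedPos_spiralStrip hn, Fin.val_castSucc, Fin.val_succ, spiralFoldedPos,
    Nat.even_iff]
  split_ifs <;> first | contradiction | omega | rfl

lemma foldedPos_lt_creasePt_spiralStrip_iff (hn : 1 ≤ n) (hℓ : 0 < ℓ) (hL : ℓ < L)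
    (i : Fin (2 * n)) :
    foldedPos (2 * n) (spiralStrip n L ℓ) i.castSucc.castSucc <
      creasePt (2 * n) (spiralStrip n L ℓ) i ↔ Even (i : ℕ) := by
  have := i.isLt
  rw [creasePt_spiralStrip hn, foldedPos_spiralStrip hn, Fin.val_castSucc, Fin.val_castSucc]
  by_cases he : Even (i : ℕ)
  · simp only [he, if_true, iff_true, spiralFoldedPos]
    split_ifs <;> linarith
  · have : (i : ℕ) ≠ 0 := by rintro h; exact he (h ▸ Even.zero)
    simp only [he, this, if_false, iff_false, spiralFoldedPos, show (i : ℕ) ≠ 2 * n + 1 by omega]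
    linarith

lemma segOverlap_spiralStrip (hn : 1 ≤ n) (hℓ : 0 < ℓ) (hL : ℓ < L) (i j : Fin (2 * n + 1)) :
    SegOverlap (2 * n) (spiralStrip n L ℓ) i j := by
  simp only [SegOverlap, segLo_spiralStrip hn hℓ.le hL.le, segHi_spiralStrip hn hℓ.le hL.le]
  rw [max_lt_iff, lt_min_iff, lt_min_iff]
  refine ⟨⟨?_, ?_⟩, ?_, ?_⟩ <;> split_ifs <;> linarith

lemma validLeveled_spiralLevel (hn : 1 ≤ n) (hℓ : 0 < ℓ) (hL : ℓ < L) :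
    ValidLeveled (2 * n) (spiralStrip n L ℓ) (spiralMV n) (spiralLevel n) := by
  refine ⟨fun i j hij _ => ?_, fun i => ?_, fun i j hlo hhi => ?_, fun i i' _ _ hside => ?_⟩
  · have := Fin.val_ne_of_ne hij
    have := spiralRank_cases n i
    have := spiralRank_cases n j
    simp only [spiralLevel, ne_eq, neg_inj, Nat.cast_inj]
    omega
  · have := spiralRank_cases n i
    have := spiralRank_cases n (i + 1)
    simp only [spiralLevel, spiralMV, Fin.val_castSucc, Fin.val_succ, neg_lt_neg_iff, Nat.cast_lt,
      decide_eq_decide, Nat.even_iff]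
    omega
  · rw [creasePt_spiralStrip hn, segLo_spiralStrip hn hℓ.le hL.le] at hlo
    rw [creasePt_spiralStrip hn, segHi_spiralStrip hn hℓ.le hL.le] at hhi
    have := spiralRank_cases n i
    have := spiralRank_cases n (i + 1)
    have := spiralRank_cases n j
    simp only [spiralLevel, Fin.val_castSucc, Fin.val_succ, Nat.even_iff] at hlo hhi ⊢
    split_ifs at hlo hhi <;> first | linarith | omega
  · rw [foldedPos_lt_creasePt_spiralStrip_iff hn hℓ hL,
      foldedPos_lt_creasePt_spiralStrip_iff hn hℓ hL, Nat.even_iff, Nat.even_iff] at hside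
    apply nestedOrDisjoint_of_add_eq
    have := spiralRank_cases n i
    have := spiralRank_cases n (i + 1)
    have := spiralRank_cases n i'
    have := spiralRank_cases n (i' + 1)
    simp only [spiralLevel, Fin.val_castSucc, Fin.val_succ]
    omega

lemma SpiralConstraints.of_validLeveled (hn : 1 ≤ n) (hℓ : 0 < ℓ) (hL : ℓ < L)
    {lev : Fin (2 * n + 1) → ℤ}
    (hlev : ValidLeveled (2 * n) (spiralStrip n L ℓ) (spiralMV n) lev)
    {a : ℕ → ℤ} (ha : ∀ k : Fin (2 * n + 1), a k = lev k) : SpiralConstraints n a := by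
  obtain ⟨hdistinct, hcrease, hnoCross, hnested⟩ := hlev
  have hsame_parity : ∀ i i' : Fin (2 * n), (Even (i : ℕ) ↔ Even (i' : ℕ)) →
      creasePt (2 * n) (spiralStrip n L ℓ) i = creasePt (2 * n) (spiralStrip n L ℓ) i' ∧
      (foldedPos (2 * n) (spiralStrip n L ℓ) i.castSucc.castSucc <
          creasePt (2 * n) (spiralStrip n L ℓ) i ↔
        foldedPos (2 * n) (spiralStrip n L ℓ) i'.castSucc.castSucc <
          creasePt (2 * n) (spiralStrip n L ℓ) i') := by
    intro i i' h
    rw [foldedPos_lt_creasePt_spiralStrip_iff hn hℓ hL,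
      foldedPos_lt_creasePt_spiralStrip_iff hn hℓ hL, creasePt_spiralStrip hn,
      creasePt_spiralStrip hn]
    exact ⟨by simp only [h], h⟩
  refine ⟨fun i hi j hj hij => ?_, fun i hi => ?_, fun m hm m' hm' hne => ?_,
    fun m hm m' hm' hne => ?_, fun m hm => ?_, fun m hm => ?_⟩
  · simp only [Set.mem_Iic] at hi hj
    by_contra hne
    have := hdistinct ⟨i, by omega⟩ ⟨j, by omega⟩ (by simpa using hne)
      (segOverlap_spiralStrip hn hℓ hL _ _)
    simp only [← ha] at this
    exact this hij
  · have := hcrease ⟨i, hi⟩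
    simp only [← ha, spiralMV, decide_eq_decide, Nat.even_iff] at this
    exact this
  · have := hnested ⟨2 * m, by omega⟩ ⟨2 * m', by omega⟩ (by simpa using hne)
      (hsame_parity _ _ (by simp)).1 (hsame_parity _ _ (by simp)).2
    simp only [← ha] at this
    exact this
  · have := hnested ⟨2 * m + 1, by omega⟩ ⟨2 * m' + 1, by omega⟩ (by simpa using hne)
      (hsame_parity _ _ (by simp)).1 (hsame_parity _ _ (by simp)).2
    simp only [← ha] at this
    exact this
  · have := hnoCross ⟨2 * m + 1, by omega⟩ ⟨0, by omega⟩
    simp only [creasePt_spiralStrip hn, segLo_spiralStrip hn hℓ.le hL.le,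
      segHi_spiralStrip hn hℓ.le hL.le, ← ha, Fin.castSucc_mk, Fin.succ_mk, Nat.even_add_one,
      even_two_mul, if_true, if_false, not_true, show 0 ≠ 2 * n by omega] at this
    exact this (by linarith) (by linarith)
  · have := hnoCross ⟨2 * m, by omega⟩ ⟨2 * n, by omega⟩
    simp only [creasePt_spiralStrip hn, segLo_spiralStrip hn hℓ.le hL.le,
      segHi_spiralStrip hn hℓ.le hL.le, ← ha, Fin.castSucc_mk, Fin.succ_mk, even_two_mul,
      if_true, show 2 * n ≠ 0 by omega, if_false] at this
    exact this (by linarith) (by linarith)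

end SpiralStrip

/-- Observation (spiral folding).  For `n ≥ 1`, the strip with `2n` creases, string
`MⁿVⁿ`, interior segments of equal length `ℓ` and the two end segments of equal
length `L > ℓ`, has a flat folded state, and it is unique up to reversal of the whole
stacking order: every valid leveled folded state induces the stacking order
`S₀, S_{2n-1}, S₂, S_{2n-3}, …, S_{2i}, S_{2(n-i)-1}, …, S₁, S_{2n}` (recorded by the
position function `ρ k = k` for `k` even, `ρ k = 2n − k` for `k` odd) or its
reverse. -/
theorem stmt_6 (n : ℕ) (hn : 1 ≤ n) (L ℓ : ℝ) (hℓ : 0 < ℓ) (hL : ℓ < L) :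
    let x : Fin (2 * n + 2) → ℝ := fun i =>
      if (i : ℕ) = 0 then 0
      else if (i : ℕ) = 2 * n + 1 then 2 * L + (2 * (n : ℝ) - 1) * ℓ
      else L + (((i : ℕ) : ℝ) - 1) * ℓ
    let s : Fin (2 * n) → Bool := fun i => decide (n ≤ (i : ℕ))
    let ρ : Fin (2 * n + 1) → ℕ := fun k =>
      if Even (k : ℕ) then (k : ℕ) else 2 * n - (k : ℕ)
    (∃ lev : Fin (2 * n + 1) → ℤ, ValidLeveled (2 * n) x s lev) ∧
    ∀ lev : Fin (2 * n + 1) → ℤ, ValidLeveled (2 * n) x s lev →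
      (∀ i j, lev i < lev j ↔ ρ i < ρ j) ∨ (∀ i j, lev i < lev j ↔ ρ j < ρ i) := by
  intro x s ρ
  refine ⟨⟨spiralLevel n, validLeveled_spiralLevel hn hℓ hL⟩,
    fun lev hlev => Or.inr fun i j => ?_⟩
  obtain ⟨a, ha⟩ : ∃ a : ℕ → ℤ, ∀ k : Fin (2 * n + 1), a k = lev k :=
    ⟨fun k => if hk : k < 2 * n + 1 then lev ⟨k, hk⟩ else 0, fun k => dif_pos k.isLt⟩
  rw [← ha, ← ha]
  exact (SpiralConstraints.of_validLeveled hn hℓ hL hlev ha).lt_iff_rank_lt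
    (Nat.le_of_lt_succ i.isLt) (Nat.le_of_lt_succ j.isLt)
end

section
/- Let A = {a_1,…,a_{3m}} be positive integers with Σa_j = mB and B/4 < a_j < B/2, and let m > 6. Suppose the 3m values 2a_j m² are assigned to m bins such that the sum of values in each bin is at most 2Bm² + 12m. Then each bin contains exactly 3 values, the values in each bin sum to exactly 2Bm², and the corresponding partition of A into m triples has each triple summing to exactly B (i.e., it is a valid 3-PARTITION solution). -/
open Finset

/-!
The slack `12m` is smaller than the scale `2m²` once `m > 6`, so every bin holds elements of
`A` of total at most `B`. Since the totals add up to `mB`, each bin holds exactly `B`; as every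
element is below `B/2`, each bin needs at least three elements, and `3m` elements in `m` bins
force exactly three per bin.
-/

lemma le_of_two_mul_mul_sq_le {x B m : ℕ} (hm : 6 < m)
    (h : 2 * x * m ^ 2 ≤ 2 * B * m ^ 2 + 12 * m) : x ≤ B := by
  by_contra! hx
  nlinarith

lemma three_le_card_of_sum_eq {ι : Type*} {s : Finset ι} {a : ι → ℕ} {B : ℕ} (hB : 0 < B)
    (hsmall : ∀ j ∈ s, 2 * a j < B) (hsum : ∑ j ∈ s, a j = B) : 3 ≤ s.card := by
  have hne : s.Nonempty := nonempty_of_sum_ne_zero (hsum ▸ hB.ne')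
  have hlt : ∑ j ∈ s, 2 * a j < ∑ _j ∈ s, B := sum_lt_sum_of_nonempty hne hsmall
  rw [← mul_sum, hsum, sum_const, smul_eq_mul] at hlt
  by_contra! hcard
  nlinarith

theorem stmt_11_general (m B : ℕ) (hm : 6 < m) (hB : 0 < B) (a : Fin (3 * m) → ℕ)
    (hsum : ∑ j, a j = m * B)
    (hbounds : ∀ j, B < 4 * a j ∧ 2 * a j < B)
    (f : Fin (3 * m) → Fin m)
    (hbin : ∀ i, ∑ j ∈ univ.filter (fun j => f j = i), 2 * a j * m ^ 2
      ≤ 2 * B * m ^ 2 + 12 * m) :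
    ∀ i, (univ.filter (fun j => f j = i)).card = 3 ∧
      (∑ j ∈ univ.filter (fun j => f j = i), 2 * a j * m ^ 2 = 2 * B * m ^ 2) ∧
      (∑ j ∈ univ.filter (fun j => f j = i), a j = B) := by
  set bin : Fin m → Finset (Fin (3 * m)) := fun i => univ.filter (fun j => f j = i)
  have hfiber (g : Fin (3 * m) → ℕ) : ∑ i, ∑ j ∈ bin i, g j = ∑ j, g j := sum_fiberwise univ f g
  have hle (i : Fin m) : ∑ j ∈ bin i, a j ≤ B :=
    le_of_two_mul_mul_sq_le hm (by simpa only [← sum_mul, ← mul_sum] using hbin i)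
  have heq (i : Fin m) : ∑ j ∈ bin i, a j = B :=
    (sum_eq_sum_iff_of_le fun i _ => hle i).1 (by simp [hfiber, hsum]) i (mem_univ i)
  have hthree (i : Fin m) : 3 ≤ (bin i).card :=
    three_le_card_of_sum_eq hB (fun j _ => (hbounds j).2) (heq i)
  have hcard (i : Fin m) : (bin i).card = 3 :=
    ((sum_eq_sum_iff_of_le fun i _ => hthree i).1
      (by simpa [mul_comm] using (hfiber fun _ => 1).symm) i (mem_univ i)).symm
  intro i
  refine ⟨hcard i, ?_, heq i⟩
  simp only [bin, ← sum_mul, ← mul_sum] at heq ⊢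
  rw [heq i]

/-- Reverse direction of the reduction's correctness.  Let `a : Fin (3m) → ℕ` be a
3-PARTITION instance with `∑ aⱼ = mB`, `B/4 < aⱼ < B/2`, and `m > 6`.  If the `3m`
values `2aⱼm²` are assigned to `m` bins (via `f`) so that each bin's sum is at most
`2Bm² + 12m`, then each bin contains exactly `3` values, the values in each bin sum to
exactly `2Bm²`, and the corresponding elements of `A` in each bin sum to exactly `B`,
i.e. it is a valid 3-PARTITION solution. -/
theorem stmt_11 (m B : ℕ) (hm : 6 < m) (hB : 0 < B) (a : Fin (3 * m) → ℕ)
    (hpos : ∀ j, 0 < a j)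
    (hsum : ∑ j, a j = m * B)
    (hbounds : ∀ j, B < 4 * a j ∧ 2 * a j < B)
    (f : Fin (3 * m) → Fin m)
    (hbin : ∀ i, ∑ j ∈ univ.filter (fun j => f j = i), 2 * a j * m ^ 2
      ≤ 2 * B * m ^ 2 + 12 * m) :
    ∀ i, (univ.filter (fun j => f j = i)).card = 3 ∧
      (∑ j ∈ univ.filter (fun j => f j = i), 2 * a j * m ^ 2 = 2 * B * m ^ 2) ∧
      (∑ j ∈ univ.filter (fun j => f j = i), a j = B) :=
  stmt_11_general m B hm hB a hsum hbounds f hbin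
end

section
/- The dynamic programming algorithm for minimum-height strip folding is correct: a strip with n creases has a leveled folded state of height at most k if and only if there is a sequence of level assignments a_0, a_1, …, a_{N} (one for each interval between consecutive stopping points of the folded image, where N ≤ 2n+2), each an injective map from the segments overlapping that interval into {1,…,k}, such that every consecutive pair (a_j, a_{j+1}) is locally compatible: (1) segments continuing across the stopping point keep the same level, (2) pairs of segments joined at folds on the same side at the stopping point have nested-or-disjoint level intervals, and (3) no segment crossing the stopping point has its level strictly inside the level interval of a fold there. -/
open Finset

/-- A (global) leveled folded state of height at most `k`: levels in `{1,…,k}`,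
injective on segments whose folded images share an open interval, subject to the
noncrossing conditions at each crease. -/
def GlobalValid (n : ℕ) (x : Fin (n + 2) → ℝ) (k : ℕ) (lev : Fin (n + 1) → Fin k) : Prop :=
  (∀ i j : Fin (n + 1), i ≠ j → SegOverlap n x i j → lev i ≠ lev j) ∧
  (∀ (i : Fin n) (j : Fin (n + 1)), segLo n x j < creasePt n x i →
      creasePt n x i < segHi n x j →
      ¬ (min (lev i.castSucc) (lev i.succ) < lev j ∧
         lev j < max (lev i.castSucc) (lev i.succ))) ∧
  (∀ i i' : Fin n, i ≠ i' → creasePt n x i = creasePt n x i' →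
      ((foldedPos n x i.castSucc.castSucc < creasePt n x i) ↔
        (foldedPos n x i'.castSucc.castSucc < creasePt n x i')) →
      nestedOrDisjoint (lev i.castSucc) (lev i.succ) (lev i'.castSucc) (lev i'.succ))

/-- The stopping points: the distinct x-coordinates of the folded images
`f(p₀), …, f(p_{n+1})` of the crease points and endpoints. -/
noncomputable def stops (n : ℕ) (x : Fin (n + 2) → ℝ) : Finset ℝ :=
  Finset.image (foldedPos n x) univ

/-- `(u, v)` is an interval between two consecutive stopping points. -/
def Gap (n : ℕ) (x : Fin (n + 2) → ℝ) (u v : ℝ) : Prop :=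
  u ∈ stops n x ∧ v ∈ stops n x ∧ u < v ∧ ∀ w ∈ stops n x, ¬ (u < w ∧ w < v)

/-- Segment `i` overlaps the interval between consecutive stopping points `u < v`. -/
def GapOverlap (n : ℕ) (x : Fin (n + 2) → ℝ) (u v : ℝ) (i : Fin (n + 1)) : Prop :=
  segLo n x i ≤ u ∧ v ≤ segHi n x i

/-- The two segments joined at crease `i` extend to the left of its folded point. -/
def ExtLeft (n : ℕ) (x : Fin (n + 2) → ℝ) (i : Fin n) : Prop :=
  foldedPos n x i.castSucc.castSucc < creasePt n x i

/-- Local data of the dynamic program: for each interval between consecutive stopping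
points, a level assignment (a map from the segments overlapping that interval into
`{1,…,k}`, injective there), such that every consecutive pair is locally compatible:
(1) segments continuing across a stopping point keep the same level, (2) pairs of
segments joined at folds on the same side of a stopping point have nested-or-disjoint
level intervals, and (3) no segment crossing a stopping point has its level strictly
inside the level interval of a fold there. -/
def LocalValid (n : ℕ) (x : Fin (n + 2) → ℝ) (k : ℕ)
    (a : ℝ → ℝ → Fin (n + 1) → Fin k) : Prop :=
  -- injectivity on each interval
  (∀ u v, Gap n x u v → ∀ i j : Fin (n + 1), i ≠ j →
      GapOverlap n x u v i → GapOverlap n x u v j → a u v i ≠ a u v j) ∧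
  -- (1) continuation across a stopping point
  (∀ u w v, Gap n x u w → Gap n x w v → ∀ i : Fin (n + 1),
      GapOverlap n x u w i → GapOverlap n x w v i → a u w i = a w v i) ∧
  -- (2) folds on the left side of a stopping point are nested or disjoint
  (∀ u w, Gap n x u w → ∀ i i' : Fin n, i ≠ i' →
      creasePt n x i = w → creasePt n x i' = w → ExtLeft n x i → ExtLeft n x i' →
      nestedOrDisjoint (a u w i.castSucc) (a u w i.succ)
        (a u w i'.castSucc) (a u w i'.succ)) ∧
  -- (2') folds on the right side of a stopping point are nested or disjoint
  (∀ w v, Gap n x w v → ∀ i i' : Fin n, i ≠ i' →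
      creasePt n x i = w → creasePt n x i' = w → ¬ ExtLeft n x i → ¬ ExtLeft n x i' →
      nestedOrDisjoint (a w v i.castSucc) (a w v i.succ)
        (a w v i'.castSucc) (a w v i'.succ)) ∧
  -- (3) no continuing segment lies strictly inside a fold on the left side
  (∀ u w, Gap n x u w → ∀ (i : Fin n) (m : Fin (n + 1)),
      creasePt n x i = w → ExtLeft n x i → segLo n x m < w → w < segHi n x m →
      ¬ (min (a u w i.castSucc) (a u w i.succ) < a u w m ∧
         a u w m < max (a u w i.castSucc) (a u w i.succ))) ∧
  -- (3') no continuing segment lies strictly inside a fold on the right side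
  (∀ w v, Gap n x w v → ∀ (i : Fin n) (m : Fin (n + 1)),
      creasePt n x i = w → ¬ ExtLeft n x i → segLo n x m < w → w < segHi n x m →
      ¬ (min (a w v i.castSucc) (a w v i.succ) < a w v m ∧
         a w v m < max (a w v i.castSucc) (a w v i.succ)))

/-!
Restricting a global level assignment to each gap between consecutive stopping points gives a
locally valid family. Conversely, condition (1) forces a segment to carry the same level on all
gaps it covers (walk leftwards to its first gap), so a locally valid family comes from a single
assignment `lev`. Each global condition is then witnessed on one gap: two overlapping segments
share a gap, and the two segments at a crease fold to the same side of the crease point, so a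
crease condition can be read off the gap adjacent to the crease point on that side.
-/

section

variable {n : ℕ} {x : Fin (n + 2) → ℝ} {k : ℕ} {a : ℝ → ℝ → Fin (n + 1) → Fin k}
  {lev : Fin (n + 1) → Fin k} {s t u v w : ℝ}

variable (x) in
lemma foldedPos_succ_sub_castSucc (j : Fin (n + 1)) :
    foldedPos n x j.succ - foldedPos n x j.castSucc
      = (-1 : ℝ) ^ (j : ℕ) * (x j.succ - x j.castSucc) := by
  simp only [foldedPos, ← Finset.sum_sub_distrib, Fin.val_succ, Fin.val_castSucc]
  rw [Finset.sum_eq_single j]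
  · simp
  · intro l _ hl
    have : (l : ℕ) ≠ j := Fin.val_ne_of_ne hl
    split_ifs <;> first | omega | ring
  · simp

lemma foldedPos_neighbors_same_side (hx : StrictMono x) (i : Fin n) :
    (foldedPos n x i.castSucc.castSucc < creasePt n x i ∧
        foldedPos n x i.succ.succ < creasePt n x i) ∨
      (creasePt n x i < foldedPos n x i.castSucc.castSucc ∧
        creasePt n x i < foldedPos n x i.succ.succ) := by
  have h₁ := foldedPos_succ_sub_castSucc x i.castSucc
  have h₂ := foldedPos_succ_sub_castSucc x i.succ
  have d₁ : 0 < x i.castSucc.succ - x i.castSucc.castSucc := sub_pos.2 (hx Fin.castSucc_lt_succ)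
  have d₂ : 0 < x i.succ.succ - x i.succ.castSucc := sub_pos.2 (hx Fin.castSucc_lt_succ)
  rw [Fin.succ_castSucc, Fin.val_castSucc] at h₁
  rw [Fin.succ_castSucc] at d₁
  rw [Fin.val_succ, pow_succ] at h₂
  unfold creasePt
  -- `creasePt - pᵢ` and `creasePt - pᵢ₊₂` are `(-1) ^ i` times positive lengths
  rcases neg_one_pow_eq_or ℝ (i : ℕ) with h | h <;> rw [h] at h₁ h₂
  · left; constructor <;> linarith
  · right; constructor <;> linarith

lemma segBounds_of_extLeft (hx : StrictMono x) {i : Fin n} (hE : ExtLeft n x i) :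
    (segLo n x i.castSucc < creasePt n x i ∧ segHi n x i.castSucc = creasePt n x i) ∧
      (segLo n x i.succ < creasePt n x i ∧ segHi n x i.succ = creasePt n x i) := by
  obtain ⟨hl, hr⟩ | ⟨hl, -⟩ := foldedPos_neighbors_same_side hx i
  · unfold segLo segHi creasePt at *
    rw [Fin.succ_castSucc]
    exact ⟨⟨min_lt_of_left_lt hl, max_eq_right hl.le⟩,
      ⟨min_lt_of_right_lt hr, max_eq_left hr.le⟩⟩
  · exact absurd hE (not_lt.2 hl.le)

lemma segBounds_of_not_extLeft (hx : StrictMono x) {i : Fin n} (hE : ¬ ExtLeft n x i) :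
    (segLo n x i.castSucc = creasePt n x i ∧ creasePt n x i < segHi n x i.castSucc) ∧
      (segLo n x i.succ = creasePt n x i ∧ creasePt n x i < segHi n x i.succ) := by
  obtain ⟨hl, -⟩ | ⟨hl, hr⟩ := foldedPos_neighbors_same_side hx i
  · exact absurd hl hE
  · unfold segLo segHi creasePt at *
    rw [Fin.succ_castSucc]
    exact ⟨⟨min_eq_right hl.le, lt_max_of_lt_left hl⟩,
      ⟨min_eq_left hr.le, lt_max_of_lt_right hr⟩⟩

lemma foldedPos_mem_stops (i : Fin (n + 2)) : foldedPos n x i ∈ stops n x :=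
  mem_image_of_mem _ (mem_univ _)

lemma segLo_mem_stops (i : Fin (n + 1)) : segLo n x i ∈ stops n x :=
  min_rec' (· ∈ stops n x) (foldedPos_mem_stops _) (foldedPos_mem_stops _)

lemma segHi_mem_stops (i : Fin (n + 1)) : segHi n x i ∈ stops n x :=
  max_rec' (· ∈ stops n x) (foldedPos_mem_stops _) (foldedPos_mem_stops _)

lemma creasePt_mem_stops (i : Fin n) : creasePt n x i ∈ stops n x :=
  foldedPos_mem_stops _

lemma segLo_lt_segHi (hx : StrictMono x) (i : Fin (n + 1)) : segLo n x i < segHi n x i := by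
  have h := foldedPos_succ_sub_castSucc x i
  have hd : x i.succ - x i.castSucc ≠ 0 := (sub_pos.2 (hx Fin.castSucc_lt_succ)).ne'
  refine min_lt_max.2 fun he => ?_
  rw [he, sub_self] at h
  exact mul_ne_zero (pow_ne_zero _ (by norm_num)) hd h.symm

lemma Gap.le_left_of_lt (h : Gap n x u v) (hs : s ∈ stops n x) (hsv : s < v) : s ≤ u :=
  not_lt.1 fun hus => h.2.2.2 s hs ⟨hus, hsv⟩

lemma Gap.right_le_of_lt (h : Gap n x u v) (ht : t ∈ stops n x) (hut : u < t) : v ≤ t :=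
  not_lt.1 fun htv => h.2.2.2 t ht ⟨hut, htv⟩

lemma Gap.right_unique (h : Gap n x u v) (h' : Gap n x u w) : v = w :=
  le_antisymm (h.right_le_of_lt h'.2.1 h'.2.2.1) (h'.right_le_of_lt h.2.1 h.2.2.1)

lemma exists_gap_right (hu : u ∈ stops n x) (ht : t ∈ stops n x) (hut : u < t) :
    ∃ v, Gap n x u v := by
  have hne : ((stops n x).filter (u < ·)).Nonempty := ⟨t, mem_filter.2 ⟨ht, hut⟩⟩
  obtain ⟨hv, huv⟩ := mem_filter.1 (min'_mem _ hne)
  exact ⟨_, hu, hv, huv, fun w hw ⟨huw, hwv⟩ =>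
    (min'_le _ w (mem_filter.2 ⟨hw, huw⟩)).not_gt hwv⟩

lemma exists_gap_left (hw : w ∈ stops n x) (hs : s ∈ stops n x) (hsw : s < w) :
    ∃ u, Gap n x u w := by
  have hne : ((stops n x).filter (· < w)).Nonempty := ⟨s, mem_filter.2 ⟨hs, hsw⟩⟩
  obtain ⟨hu, huw⟩ := mem_filter.1 (max'_mem _ hne)
  exact ⟨_, hu, hw, huw, fun t ht ⟨hut, htw⟩ =>
    (le_max' _ t (mem_filter.2 ⟨ht, htw⟩)).not_gt hut⟩

lemma Gap.gapOverlap_of_lt (h : Gap n x u v) {i : Fin (n + 1)} (hlo : segLo n x i < v)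
    (hhi : u < segHi n x i) : GapOverlap n x u v i :=
  ⟨h.le_left_of_lt (segLo_mem_stops i) hlo, h.right_le_of_lt (segHi_mem_stops i) hhi⟩

lemma Gap.gapOverlap_of_extLeft (hx : StrictMono x) (h : Gap n x u w) {i : Fin n}
    (hw : creasePt n x i = w) (hE : ExtLeft n x i) :
    GapOverlap n x u w i.castSucc ∧ GapOverlap n x u w i.succ := by
  subst hw
  obtain ⟨⟨hlo₁, hhi₁⟩, hlo₂, hhi₂⟩ := segBounds_of_extLeft hx hE
  exact ⟨h.gapOverlap_of_lt hlo₁ (h.2.2.1.trans_eq hhi₁.symm),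
    h.gapOverlap_of_lt hlo₂ (h.2.2.1.trans_eq hhi₂.symm)⟩

lemma Gap.gapOverlap_of_not_extLeft (hx : StrictMono x) (h : Gap n x w v) {i : Fin n}
    (hw : creasePt n x i = w) (hE : ¬ ExtLeft n x i) :
    GapOverlap n x w v i.castSucc ∧ GapOverlap n x w v i.succ := by
  subst hw
  obtain ⟨⟨hlo₁, hhi₁⟩, hlo₂, hhi₂⟩ := segBounds_of_not_extLeft hx hE
  exact ⟨h.gapOverlap_of_lt (hlo₁.trans_lt h.2.2.1) hhi₁,
    h.gapOverlap_of_lt (hlo₂.trans_lt h.2.2.1) hhi₂⟩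

lemma apply_eq_apply_of_gap_segLo
    (hcont : ∀ u w v, Gap n x u w → Gap n x w v → ∀ i : Fin (n + 1),
      GapOverlap n x u w i → GapOverlap n x w v i → a u w i = a w v i)
    {i : Fin (n + 1)} {v₀ : ℝ} (h₀ : Gap n x (segLo n x i) v₀)
    {u v : ℝ} (hg : Gap n x u v) (ho : GapOverlap n x u v i) :
    a u v i = a (segLo n x i) v₀ i := by
  rcases ho.1.eq_or_lt with hu | hlt
  · subst hu
    rw [hg.right_unique h₀]
  · obtain ⟨u', hg'⟩ := exists_gap_left hg.1 (segLo_mem_stops i) hlt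
    have ho' : GapOverlap n x u' u i :=
      ⟨hg'.le_left_of_lt (segLo_mem_stops i) hlt, hg.2.2.1.le.trans ho.2⟩
    rw [← hcont u' u v hg' hg i ho' ho]
    exact apply_eq_apply_of_gap_segLo hcont h₀ hg' ho'
termination_by #((stops n x).filter (· < u))
decreasing_by
  refine card_lt_card (ssubset_iff_of_subset ?_ |>.2 ⟨u', ?_, ?_⟩) <;>
    grind [Gap]

lemma exists_level_of_continuation (hx : StrictMono x)
    (hcont : ∀ u w v, Gap n x u w → Gap n x w v → ∀ i : Fin (n + 1),
      GapOverlap n x u w i → GapOverlap n x w v i → a u w i = a w v i)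
    (i : Fin (n + 1)) :
    ∃ l, ∀ u v, Gap n x u v → GapOverlap n x u v i → a u v i = l := by
  obtain ⟨v₀, h₀⟩ :=
    exists_gap_right (segLo_mem_stops i) (segHi_mem_stops i) (segLo_lt_segHi hx i)
  exact ⟨_, fun u v hg ho => apply_eq_apply_of_gap_segLo hcont h₀ hg ho⟩

lemma localValid_const (h : GlobalValid n x k lev) :
    LocalValid n x k fun _ _ => lev := by
  obtain ⟨hinj, hcross, hnest⟩ := h
  refine ⟨fun u v hg i j hij hoi hoj => hinj i j hij ?_, fun _ _ _ _ _ _ _ _ => rfl,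
    fun u w _ i i' hii' hi hi' hE hE' => hnest i i' hii' (hi.trans hi'.symm) (iff_of_true hE hE'),
    fun w v _ i i' hii' hi hi' hE hE' =>
      hnest i i' hii' (hi.trans hi'.symm) (iff_of_false hE hE'),
    fun u w _ i m hi _ hlo hhi => hcross i m (hi ▸ hlo) (hi ▸ hhi),
    fun w v _ i m hi _ hlo hhi => hcross i m (hi ▸ hlo) (hi ▸ hhi)⟩
  exact (max_le hoi.1 hoj.1).trans_lt (hg.2.2.1.trans_le (le_min hoi.2 hoj.2))

lemma ne_of_segOverlap_of_localValid (h : LocalValid n x k a)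
    (hlev : ∀ u v i, Gap n x u v → GapOverlap n x u v i → a u v i = lev i)
    {i j : Fin (n + 1)} (hij : i ≠ j) (hov : SegOverlap n x i j) : lev i ≠ lev j := by
  have hu := max_rec' (· ∈ stops n x) (segLo_mem_stops i) (segLo_mem_stops j)
  have ht := min_rec' (· ∈ stops n x) (segHi_mem_stops i) (segHi_mem_stops j)
  obtain ⟨v, hg⟩ := exists_gap_right hu ht hov
  have hoi := hg.gapOverlap_of_lt ((le_max_left _ _).trans_lt hg.2.2.1)
    (hov.trans_le (min_le_left _ _))
  have hoj := hg.gapOverlap_of_lt ((le_max_right _ _).trans_lt hg.2.2.1)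
    (hov.trans_le (min_le_right _ _))
  simpa only [hlev _ _ _ hg hoi, hlev _ _ _ hg hoj] using h.1 _ _ hg i j hij hoi hoj

lemma not_between_crease_of_localValid (hx : StrictMono x) (h : LocalValid n x k a)
    (hlev : ∀ u v i, Gap n x u v → GapOverlap n x u v i → a u v i = lev i)
    {i : Fin n} {j : Fin (n + 1)} (hlo : segLo n x j < creasePt n x i)
    (hhi : creasePt n x i < segHi n x j) :
    ¬ (min (lev i.castSucc) (lev i.succ) < lev j ∧
        lev j < max (lev i.castSucc) (lev i.succ)) := by
  by_cases hE : ExtLeft n x i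
  · obtain ⟨u, hg⟩ := exists_gap_left (creasePt_mem_stops i) (segLo_mem_stops j) hlo
    obtain ⟨ho₁, ho₂⟩ := hg.gapOverlap_of_extLeft hx rfl hE
    have hoj := hg.gapOverlap_of_lt hlo (hg.2.2.1.trans hhi)
    simpa only [hlev _ _ _ hg ho₁, hlev _ _ _ hg ho₂, hlev _ _ _ hg hoj]
      using h.2.2.2.2.1 _ _ hg i j rfl hE hlo hhi
  · obtain ⟨v, hg⟩ := exists_gap_right (creasePt_mem_stops i) (segHi_mem_stops j) hhi
    obtain ⟨ho₁, ho₂⟩ := hg.gapOverlap_of_not_extLeft hx rfl hE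
    have hoj := hg.gapOverlap_of_lt (hlo.trans hg.2.2.1) hhi
    simpa only [hlev _ _ _ hg ho₁, hlev _ _ _ hg ho₂, hlev _ _ _ hg hoj]
      using h.2.2.2.2.2 _ _ hg i j rfl hE hlo hhi

lemma nestedOrDisjoint_of_localValid (hx : StrictMono x) (h : LocalValid n x k a)
    (hlev : ∀ u v i, Gap n x u v → GapOverlap n x u v i → a u v i = lev i)
    {i i' : Fin n} (hii' : i ≠ i') (hc : creasePt n x i = creasePt n x i')
    (hside : ExtLeft n x i ↔ ExtLeft n x i') :
    nestedOrDisjoint (lev i.castSucc) (lev i.succ) (lev i'.castSucc) (lev i'.succ) := by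
  by_cases hE : ExtLeft n x i
  · obtain ⟨u, hg⟩ := exists_gap_left (creasePt_mem_stops i) (segLo_mem_stops i.castSucc)
      (segBounds_of_extLeft hx hE).1.1
    have hE' := hside.1 hE
    obtain ⟨ho₁, ho₂⟩ := hg.gapOverlap_of_extLeft hx rfl hE
    obtain ⟨ho₁', ho₂'⟩ := hg.gapOverlap_of_extLeft hx hc.symm hE'
    simpa only [hlev _ _ _ hg ho₁, hlev _ _ _ hg ho₂, hlev _ _ _ hg ho₁',
      hlev _ _ _ hg ho₂']
      using h.2.2.1 _ _ hg i i' hii' rfl hc.symm hE hE'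
  · obtain ⟨v, hg⟩ := exists_gap_right (creasePt_mem_stops i) (segHi_mem_stops i.castSucc)
      (segBounds_of_not_extLeft hx hE).1.2
    have hE' := mt hside.2 hE
    obtain ⟨ho₁, ho₂⟩ := hg.gapOverlap_of_not_extLeft hx rfl hE
    obtain ⟨ho₁', ho₂'⟩ := hg.gapOverlap_of_not_extLeft hx hc.symm hE'
    simpa only [hlev _ _ _ hg ho₁, hlev _ _ _ hg ho₂, hlev _ _ _ hg ho₁',
      hlev _ _ _ hg ho₂']
      using h.2.2.2.1 _ _ hg i i' hii' rfl hc.symm hE hE'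

lemma globalValid_of_localValid (hx : StrictMono x) (h : LocalValid n x k a)
    (hlev : ∀ u v i, Gap n x u v → GapOverlap n x u v i → a u v i = lev i) :
    GlobalValid n x k lev :=
  ⟨fun _ _ hij hov => ne_of_segOverlap_of_localValid h hlev hij hov,
    fun _ _ hlo hhi => not_between_crease_of_localValid hx h hlev hlo hhi,
    fun _ _ hii' hc hside => nestedOrDisjoint_of_localValid hx h hlev hii' hc hside⟩

end

/-- Correctness of the dynamic programming algorithm for minimum-height strip folding:
a strip with `n` creases has a leveled folded state of height at most `k` if and only
if there is a family of level assignments, one for each interval between consecutive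
stopping points of the folded image, injective on the segments overlapping each
interval, with every consecutive pair locally compatible (conditions (1)–(3)). -/
theorem stmt_15 (n : ℕ) (x : Fin (n + 2) → ℝ) (hx : StrictMono x) (k : ℕ) :
    (∃ lev : Fin (n + 1) → Fin k, GlobalValid n x k lev) ↔
    (∃ a : ℝ → ℝ → Fin (n + 1) → Fin k, LocalValid n x k a) := by
  refine ⟨fun ⟨lev, h⟩ => ⟨_, localValid_const h⟩, fun ⟨a, h⟩ => ?_⟩
  choose lev hlev using exists_level_of_continuation hx h.2.1
  exact ⟨lev, globalValid_of_localValid hx h fun u v i => hlev i u v⟩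
end
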